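/- For the normalized Gaussian Ψ(x) = (πa²)^{-3/4} exp(-‖x‖²/(2a²)), one has ∬ |Ψ(x)|²|Ψ(y)|²/‖x-y‖ d³x d³y = √(2/π) / a. -/

import Mathlib

open Real MeasureTheory Set Metric

noncomputable section GaussianSelfEnergyAux

local notation "E3" => EuclideanSpace ℝ (Fin 3)

private def gaussF (b : ℝ) (v : E3) : ℝ := Real.exp (-(b * ‖v‖ ^ 2))
private def radF (c : ℝ) (y : E3) : ℝ := Real.exp (-(c * ‖y‖ ^ 2)) / ‖y‖

private lemma measurable_gaussF (b : ℝ) : Measurable (gaussF b) := by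
  unfold gaussF; fun_prop

private lemma measurable_radF (c : ℝ) : Measurable (radF c) := by
  unfold radF
  exact (Real.measurable_exp.comp (((measurable_norm.pow_const 2).const_mul c).neg)).div
    measurable_norm

private lemma integral_Ioi_mul_exp {c : ℝ} (hc : 0 < c) :
    ∫ r in Ioi (0:ℝ), r * Real.exp (-(c * r ^ 2)) = (2 * c)⁻¹ := by
  have A : ∀ x : ℝ, HasDerivAt (fun x => -(2 * c)⁻¹ * Real.exp (-(c * x ^ 2)))
      (x * Real.exp (-(c * x ^ 2))) x := by
    intro x
    convert (((hasDerivAt_pow 2 x).const_mul (-c)).exp.const_mul (-(2 * c)⁻¹)) using 1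
    · rfl
    · rfl
    · ext y; ring_nf
    · have hc0 : c ≠ 0 := hc.ne'
      push_cast
      field_simp
  have B : Filter.Tendsto (fun y : ℝ ↦ -(2 * c)⁻¹ * Real.exp (-(c * y ^ 2)))
      Filter.atTop (nhds (-(2 * c)⁻¹ * 0)) := by
    refine Filter.Tendsto.const_mul _ ?_
    apply Real.tendsto_exp_atBot.comp
    have : Filter.Tendsto (fun y : ℝ => c * y ^ 2) Filter.atTop Filter.atTop :=
      (Filter.tendsto_pow_atTop two_ne_zero).const_mul_atTop hc
    exact Filter.tendsto_neg_atTop_atBot.comp this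
  have hint : IntegrableOn (fun x : ℝ => x * Real.exp (-(c * x ^ 2))) (Ioi 0) := by
    have := (integrable_mul_exp_neg_mul_sq hc).integrableOn (s := Ioi 0)
    refine this.congr_fun (fun x _ => by ring_nf) measurableSet_Ioi
  have := integral_Ioi_of_hasDerivAt_of_tendsto' (a := 0) (fun x _ => A x) hint B
  rw [this]
  norm_num

private lemma integrable_gauss3 {b : ℝ} (hb : 0 < b) : Integrable (gaussF b) := by
  have h := (GaussianFourier.integrable_cexp_neg_mul_sq_norm_add (V := E3)
    (b := (b : ℂ)) (by simpa using hb) 0 0).norm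
  refine h.congr ?_
  filter_upwards with v
  simp only [Complex.norm_exp]
  unfold gaussF
  norm_num
  left
  norm_cast

private lemma integral_gauss3 {b : ℝ} (hb : 0 < b) :
    ∫ v : E3, gaussF b v = (π / b) ^ ((3:ℝ) / 2) := by
  have := GaussianFourier.integral_rexp_neg_mul_sq_norm (V := E3) hb
  simp only [finrank_euclideanSpace_fin] at this
  rw [show ((3:ℕ):ℝ)/2 = (3:ℝ)/2 by norm_num] at this
  rw [← this]
  unfold gaussF
  congr 1 with v
  ring_nf

private lemma integrable_on_iff_comap {s : Set ℝ} (hs : MeasurableSet s) (g : ℝ → ℝ) :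
    IntegrableOn g s ↔ Integrable (fun r : s => g r.1) (Measure.comap Subtype.val volume) := by
  rw [IntegrableOn, ← map_comap_subtype_coe hs,
    (MeasurableEmbedding.subtype_coe hs).integrable_map_iff]
  rfl

private lemma integrable_fun_norm3 {f : ℝ → ℝ}
    (h1 : IntegrableOn (fun r => f r * r ^ 2) (Ioi (0:ℝ))) :
    Integrable (fun x : E3 => f ‖x‖) := by
  have step1 : Integrable (fun r : Ioi (0:ℝ) => f r.1) (Measure.volumeIoiPow 2) := by
    rw [Measure.volumeIoiPow, integrable_withDensity_iff
      ((measurable_subtype_coe.pow_const 2).ennreal_ofReal)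
      (Filter.Eventually.of_forall fun x => ENNReal.ofReal_lt_top)]
    have : (fun r : Ioi (0:ℝ) => f r.1 * (ENNReal.ofReal (r.1 ^ 2)).toReal)
        = fun r : Ioi (0:ℝ) => (fun t : ℝ => f t * t ^ 2) r.1 := by
      funext r
      rw [ENNReal.toReal_ofReal (sq_nonneg _)]
    rw [this]
    exact (integrable_on_iff_comap measurableSet_Ioi _).1 h1
  have step2 : Integrable (fun z : sphere (0:E3) 1 × Ioi (0:ℝ) => f z.2.1)
      ((volume : Measure E3).toSphere.prod (Measure.volumeIoiPow 2)) := by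
    have h := Integrable.mul_prod (L := ℝ)
      (integrable_const (μ := (volume : Measure E3).toSphere) (1:ℝ)) step1
    refine h.congr ?_
    filter_upwards with z
    simp
  have hdim : Module.finrank ℝ E3 = 3 := finrank_euclideanSpace_fin
  have mp := (volume : Measure E3).measurePreserving_homeomorphUnitSphereProd
  rw [show Module.finrank ℝ E3 - 1 = 2 by rw [hdim]] at mp
  have step3 : Integrable (fun x : ({(0:E3)}ᶜ : Set E3) => f ‖x.1‖)
      (Measure.comap Subtype.val volume) := by
    have := (mp.integrable_comp_emb (Homeomorph.measurableEmbedding _)).2 step2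
    refine this.congr (Filter.Eventually.of_forall fun x => ?_)
    simp [homeomorphUnitSphereProd]
  have step4 : IntegrableOn (fun x : E3 => f ‖x‖) ({(0:E3)}ᶜ) := by
    rw [IntegrableOn, ← map_comap_subtype_coe (measurableSet_singleton (0:E3)).compl,
      (MeasurableEmbedding.subtype_coe (measurableSet_singleton (0:E3)).compl).integrable_map_iff]
    exact step3
  have : (volume : Measure E3) = (volume : Measure E3).restrict ({(0:E3)}ᶜ) :=
    (MeasureTheory.restrict_compl_singleton (0:E3)).symm
  rw [Integrable, this]
  exact step4

private lemma integrable_h3 {c : ℝ} (hc : 0 < c) : Integrable (radF c) := by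
  refine integrable_fun_norm3 (f := fun r => Real.exp (-(c * r ^ 2)) / r) ?_
  have hint : IntegrableOn (fun x : ℝ => x * Real.exp (-(c * x ^ 2))) (Ioi 0) := by
    have := (integrable_mul_exp_neg_mul_sq hc).integrableOn (s := Ioi 0)
    exact this.congr_fun (fun x _ => by ring_nf) measurableSet_Ioi
  refine hint.congr_fun (fun x hx => ?_) measurableSet_Ioi
  have hx0 : x ≠ 0 := ne_of_gt hx
  field_simp

private lemma gamma52 : Real.Gamma ((3:ℝ) / 2 + 1) = 3 / 4 * Real.sqrt π := by
  rw [Real.Gamma_add_one (by norm_num)]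
  have : (3:ℝ)/2 = 1/2 + 1 := by norm_num
  rw [this, Real.Gamma_add_one (by norm_num), Real.Gamma_one_half_eq]
  ring

private lemma vol_ball3 : (volume (ball (0 : E3) 1)).toReal = 4 * π / 3 := by
  rw [EuclideanSpace.volume_ball]
  simp only [Fintype.card_fin]
  rw [show ((3:ℕ):ℝ)/2 = (3:ℝ)/2 by norm_num, gamma52]
  rw [ENNReal.ofReal_one, one_pow, one_mul, ENNReal.toReal_ofReal (by positivity)]
  rw [show Real.sqrt π ^ 3 = π * Real.sqrt π by
    rw [pow_succ, sq_sqrt pi_pos.le]]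
  have h : Real.sqrt π > 0 := Real.sqrt_pos.2 pi_pos
  field_simp

private lemma integral_h3 {c : ℝ} (hc : 0 < c) :
    ∫ y : E3, radF c y = 2 * π / c := by
  have key := MeasureTheory.integral_fun_norm_addHaar (E := E3)
    (volume) (fun r => Real.exp (-(c * r ^ 2)) / r)
  simp only [finrank_euclideanSpace_fin] at key
  unfold radF
  rw [key, measureReal_def, vol_ball3]
  have : ∫ y in Ioi (0:ℝ), y ^ (3 - 1) • (Real.exp (-(c * y ^ 2)) / y)
      = ∫ y in Ioi (0:ℝ), y * Real.exp (-(c * y ^ 2)) := by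
    refine setIntegral_congr_fun measurableSet_Ioi (fun x hx => ?_)
    have hx0 : x ≠ 0 := ne_of_gt hx
    field_simp
    rw [smul_eq_mul]
    field_simp
  rw [this, integral_Ioi_mul_exp hc]
  simp only [smul_eq_mul, nsmul_eq_mul]
  field_simp
  ring

private lemma norm_sq_id (x y : E3) :
    ‖x‖ ^ 2 + ‖x + y‖ ^ 2 = 2 * ‖x + (2⁻¹:ℝ) • y‖ ^ 2 + 2⁻¹ * ‖y‖ ^ 2 := by
  have h1 := norm_add_sq_real x y
  have h2 := norm_add_sq_real x ((2⁻¹:ℝ) • y)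
  rw [real_inner_smul_right, norm_smul] at h2
  simp only [norm_inv, Real.norm_ofNat] at h2
  rw [h1, h2]
  ring

private lemma inner_integral_const_eq {b : ℝ} (hb : 0 < b) (c : ℝ) (y : E3) :
    ∫ x : E3, gaussF b (x + (2⁻¹:ℝ) • y) * radF c y
      = (π / b) ^ ((3:ℝ)/2) * radF c y := by
  rw [MeasureTheory.integral_mul_const]
  rw [MeasureTheory.integral_add_right_eq_self (gaussF b) ((2⁻¹:ℝ) • y)]
  rw [integral_gauss3 hb]

private lemma swap_key {b c : ℝ} (hb : 0 < b) (hc : 0 < c) :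
    ∫ x : E3, ∫ y : E3, gaussF b (x + (2⁻¹:ℝ) • y) * radF c y
      = (π / b) ^ ((3:ℝ)/2) * (2 * π / c) := by
  have hg := integrable_gauss3 hb
  have hh := integrable_h3 hc
  have hF : Integrable (Function.uncurry fun x y : E3 =>
      gaussF b (x + (2⁻¹:ℝ) • y) * radF c y)
      ((volume : Measure E3).prod volume) := by
    refine (integrable_prod_iff' ?_).2 ⟨?_, ?_⟩
    · apply Measurable.aestronglyMeasurable
      apply Measurable.mul
      · exact (measurable_gaussF b).comp
          (measurable_fst.add (measurable_snd.const_smul (2⁻¹:ℝ)))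
      · exact (measurable_radF c).comp measurable_snd
    · filter_upwards with y
      simpa [Function.uncurry_apply_pair] using
        (hg.comp_add_right ((2⁻¹:ℝ) • y)).mul_const (radF c y)
    · have heq : (fun y : E3 => ∫ x : E3, ‖gaussF b (x + (2⁻¹:ℝ) • y) * radF c y‖)
          = fun y : E3 => (π / b) ^ ((3:ℝ)/2) * radF c y := by
        funext y
        have h0 : ∀ x : E3, ‖gaussF b (x + (2⁻¹:ℝ) • y) * radF c y‖
            = gaussF b (x + (2⁻¹:ℝ) • y) * radF c y := fun x =>
          Real.norm_of_nonneg (mul_nonneg (Real.exp_pos _).le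
            (div_nonneg (Real.exp_pos _).le (norm_nonneg _)))
        simp_rw [h0]
        exact inner_integral_const_eq hb c y
      simp only [Function.uncurry_apply_pair]
      rw [heq]
      exact hh.const_mul _
  rw [MeasureTheory.integral_integral_swap hF]
  simp_rw [inner_integral_const_eq hb c]
  rw [MeasureTheory.integral_const_mul, integral_h3 hc]

private lemma pointwise_id {a : ℝ} (ha : 0 < a) (x y : E3) :
    ((π * a ^ 2) ^ (-(3:ℝ)/4) * Real.exp (-‖x‖ ^ 2 / (2 * a ^ 2))) ^ 2 *
      ((π * a ^ 2) ^ (-(3:ℝ)/4) * Real.exp (-‖y + x‖ ^ 2 / (2 * a ^ 2))) ^ 2 / ‖x - (y + x)‖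
    = ((π * a ^ 2) ^ (-(3:ℝ)/4)) ^ 4 *
        (gaussF (2 / a ^ 2) (x + (2⁻¹:ℝ) • y) * radF (1 / (2 * a ^ 2)) y) := by
  have hxy : x - (y + x) = -y := by abel
  rw [hxy, norm_neg]
  unfold gaussF radF
  have ha2 : a ^ 2 ≠ 0 := by positivity
  have harg : 2 * (-‖x‖ ^ 2 / (2 * a ^ 2)) + 2 * (-‖y + x‖ ^ 2 / (2 * a ^ 2))
      = -(2 / a ^ 2 * ‖x + (2⁻¹:ℝ) • y‖ ^ 2) + -(1 / (2 * a ^ 2) * ‖y‖ ^ 2) := by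
    have h := norm_sq_id x y
    rw [add_comm y x]
    linear_combination (-1/a^2) * h
  have e1 : Real.exp (-‖x‖ ^ 2 / (2 * a ^ 2)) ^ 2
      = Real.exp (2 * (-‖x‖ ^ 2 / (2 * a ^ 2))) := by
    rw [show ((2:ℝ)) = ((2:ℕ):ℝ) by norm_num, Real.exp_nat_mul]
  have e2 : Real.exp (-‖y + x‖ ^ 2 / (2 * a ^ 2)) ^ 2
      = Real.exp (2 * (-‖y + x‖ ^ 2 / (2 * a ^ 2))) := by
    rw [show ((2:ℝ)) = ((2:ℕ):ℝ) by norm_num, Real.exp_nat_mul]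
  rw [mul_pow, mul_pow, e1, e2]
  set A := (π * a ^ 2) ^ (-(3:ℝ)/4) with hA
  have hnum : A ^ 2 * Real.exp (2 * (-‖x‖ ^ 2 / (2 * a ^ 2))) *
      (A ^ 2 * Real.exp (2 * (-‖y + x‖ ^ 2 / (2 * a ^ 2))))
      = A ^ 4 * (Real.exp (-(2 / a ^ 2 * ‖x + (2⁻¹:ℝ) • y‖ ^ 2)) *
          Real.exp (-(1 / (2 * a ^ 2) * ‖y‖ ^ 2))) := by
    have hprod : Real.exp (2 * (-‖x‖ ^ 2 / (2 * a ^ 2))) *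
        Real.exp (2 * (-‖y + x‖ ^ 2 / (2 * a ^ 2)))
        = Real.exp (-(2 / a ^ 2 * ‖x + (2⁻¹:ℝ) • y‖ ^ 2)) *
          Real.exp (-(1 / (2 * a ^ 2) * ‖y‖ ^ 2)) := by
      rw [← Real.exp_add, ← Real.exp_add, harg]
    calc A ^ 2 * Real.exp (2 * (-‖x‖ ^ 2 / (2 * a ^ 2))) *
        (A ^ 2 * Real.exp (2 * (-‖y + x‖ ^ 2 / (2 * a ^ 2))))
        = A ^ 4 * (Real.exp (2 * (-‖x‖ ^ 2 / (2 * a ^ 2))) *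
            Real.exp (2 * (-‖y + x‖ ^ 2 / (2 * a ^ 2)))) := by ring
      _ = _ := by rw [hprod]
  calc A ^ 2 * Real.exp (2 * (-‖x‖ ^ 2 / (2 * a ^ 2))) *
      (A ^ 2 * Real.exp (2 * (-‖y + x‖ ^ 2 / (2 * a ^ 2)))) / ‖y‖
      = A ^ 4 * (Real.exp (-(2 / a ^ 2 * ‖x + (2⁻¹:ℝ) • y‖ ^ 2)) *
          Real.exp (-(1 / (2 * a ^ 2) * ‖y‖ ^ 2))) / ‖y‖ := by rw [hnum]
    _ = A ^ 4 * (Real.exp (-(2 / a ^ 2 * ‖x + (2⁻¹:ℝ) • y‖ ^ 2)) *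
          (Real.exp (-(1 / (2 * a ^ 2) * ‖y‖ ^ 2)) / ‖y‖)) := by ring

private lemma final_num (a : ℝ) (ha : 0 < a) :
    ((π * a ^ 2) ^ (-(3:ℝ)/4)) ^ 4 * ((π / (2 / a ^ 2)) ^ ((3:ℝ)/2) * (2 * π / (1 / (2 * a ^ 2))))
      = Real.sqrt (2 / π) / a := by
  have hπ : (0:ℝ) < π := pi_pos
  have ht : (0:ℝ) < π * a ^ 2 := by positivity
  have h1 : ((π * a ^ 2) ^ (-(3:ℝ)/4)) ^ 4 = (π * a ^ 2) ^ (-(3:ℝ)) := by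
    rw [← Real.rpow_natCast ((π * a ^ 2) ^ (-(3:ℝ)/4)) 4, ← Real.rpow_mul ht.le]
    norm_num
  have h2 : π / (2 / a ^ 2) = π * a ^ 2 / 2 := by field_simp
  have h3 : 2 * π / (1 / (2 * a ^ 2)) = 4 * (π * a ^ 2) := by field_simp; ring
  rw [h1, h2, h3, Real.div_rpow ht.le (by norm_num)]
  have h4 : (π * a ^ 2) ^ (-(3:ℝ)) * ((π * a ^ 2) ^ ((3:ℝ)/2) / 2 ^ ((3:ℝ)/2) * (4 * (π * a ^ 2)))
      = (π * a ^ 2) ^ (-(1:ℝ)/2) * (4 / 2 ^ ((3:ℝ)/2)) := by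
    rw [show (4:ℝ) * (π * a ^ 2) = 4 * (π * a ^ 2) ^ (1:ℝ) by rw [Real.rpow_one]]
    rw [show (π * a^2) ^ (-(3:ℝ)) * ((π * a ^ 2) ^ ((3:ℝ)/2) / 2 ^ ((3:ℝ)/2) * (4 * (π * a ^ 2) ^ (1:ℝ)))
      = ((π * a^2) ^ (-(3:ℝ)) * (π * a ^ 2) ^ ((3:ℝ)/2) * (π * a ^ 2) ^ (1:ℝ)) * (4 / 2 ^ ((3:ℝ)/2)) by ring]
    rw [← Real.rpow_add ht, ← Real.rpow_add ht]
    norm_num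
  rw [h4]
  have h5 : (4:ℝ) / 2 ^ ((3:ℝ)/2) = Real.sqrt 2 := by
    rw [div_eq_iff (by positivity : (2:ℝ) ^ ((3:ℝ)/2) ≠ 0), show Real.sqrt 2 = 2 ^ ((1:ℝ)/2) from
      Real.sqrt_eq_rpow 2, ← Real.rpow_add (by norm_num : (0:ℝ) < 2)]
    rw [show (1:ℝ)/2 + 3/2 = ((2:ℕ):ℝ) by norm_num, Real.rpow_natCast]
    norm_num
  rw [h5]
  have h6 : (π * a ^ 2) ^ (-(1:ℝ)/2) = (Real.sqrt π * a)⁻¹ := by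
    rw [show (-(1:ℝ)/2) = -(1/2 : ℝ) by norm_num, Real.rpow_neg ht.le,
      ← Real.sqrt_eq_rpow, Real.sqrt_mul hπ.le, Real.sqrt_sq ha.le]
  rw [h6, Real.sqrt_div (by norm_num : (0:ℝ) ≤ 2) π]
  have hsp : Real.sqrt π ≠ 0 := by positivity
  field_simp

end GaussianSelfEnergyAux

open Real MeasureTheory in
/-- For the normalized Gaussian `Ψ(x) = (πa²)^{-3/4} exp(-‖x‖²/(2a²))` on `ℝ³`, the
Coulomb-type double integral evaluates to
`∬ |Ψ(x)|²|Ψ(y)|²/‖x-y‖ d³x d³y = √(2/π) / a`. -/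
theorem gaussian_self_energy_integral (a : ℝ) (ha : 0 < a) :
    (∫ x : EuclideanSpace ℝ (Fin 3), ∫ y : EuclideanSpace ℝ (Fin 3),
        ((π * a ^ 2) ^ (-(3 : ℝ) / 4) * Real.exp (-‖x‖ ^ 2 / (2 * a ^ 2))) ^ 2 *
          ((π * a ^ 2) ^ (-(3 : ℝ) / 4) * Real.exp (-‖y‖ ^ 2 / (2 * a ^ 2))) ^ 2 / ‖x - y‖)
      = Real.sqrt (2 / π) / a := by
  have hb : (0:ℝ) < 2 / a ^ 2 := by positivity
  have hc : (0:ℝ) < 1 / (2 * a ^ 2) := by positivity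
  have step : ∀ x : EuclideanSpace ℝ (Fin 3),
      (∫ y : EuclideanSpace ℝ (Fin 3),
        ((π * a ^ 2) ^ (-(3 : ℝ) / 4) * Real.exp (-‖x‖ ^ 2 / (2 * a ^ 2))) ^ 2 *
          ((π * a ^ 2) ^ (-(3 : ℝ) / 4) * Real.exp (-‖y‖ ^ 2 / (2 * a ^ 2))) ^ 2 / ‖x - y‖)
      = ((π * a ^ 2) ^ (-(3:ℝ)/4)) ^ 4 *
          ∫ y : EuclideanSpace ℝ (Fin 3),
            gaussF (2 / a ^ 2) (x + (2⁻¹:ℝ) • y) * radF (1 / (2 * a ^ 2)) y := by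
    intro x
    rw [← MeasureTheory.integral_add_right_eq_self (μ := volume)
      (fun y : EuclideanSpace ℝ (Fin 3) =>
        ((π * a ^ 2) ^ (-(3 : ℝ) / 4) * Real.exp (-‖x‖ ^ 2 / (2 * a ^ 2))) ^ 2 *
          ((π * a ^ 2) ^ (-(3 : ℝ) / 4) * Real.exp (-‖y‖ ^ 2 / (2 * a ^ 2))) ^ 2 / ‖x - y‖) x]
    rw [← MeasureTheory.integral_const_mul]
    refine integral_congr_ae (Filter.Eventually.of_forall fun y => ?_)
    exact pointwise_id ha x y
  simp_rw [step]
  rw [MeasureTheory.integral_const_mul, swap_key hb hc]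
  exact final_num a ha
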